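/- Let U ∈ ℝ^{d×n} be a frame, z ∈ ℝ^n a positive vector, c ∈ ℝ^n with Σ_j c_j = d, and T ⊆ [n] a nonempty proper subset with margin γ > 0. Let h(α) := Σ_{j∈T} lev^U_j(z ∘ (1_{T^c} + α·1_T)) be the proxy function. Then: (1) h is non-decreasing on [1,∞); (2) h(α) → rank(U_T) as α → ∞, where U_T is the submatrix of columns indexed by T; (3) Σ_{j∈T} c_j − h(1) ≥ γ; (4) if rank(U_T) ≥ Σ_{j∈T} c_j, then for every δ ∈ [0,γ) there exists a finite α ≥ 1 with h(α) = h(1) + δ. -/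

import Mathlib

open Matrix BigOperators

/-- Leverage scores: `lev^U_j(z) = z_j · u_jᵀ (U Z Uᵀ)⁻¹ u_j`. -/
noncomputable def lev {d n : ℕ} (U : Matrix (Fin d) (Fin n) ℝ) (z : Fin n → ℝ)
    (j : Fin n) : ℝ :=
  z j * ((fun i => U i j) ⬝ᵥ ((U * Matrix.diagonal z * Uᵀ)⁻¹ *ᵥ fun i => U i j))

/-- `scale z T α = z ∘ (1_{Tᶜ} + α·1_T)`. -/
def scale {n : ℕ} (z : Fin n → ℝ) (T : Finset (Fin n)) (α : ℝ) : Fin n → ℝ :=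
  fun j => if j ∈ T then α * z j else z j

/-- The proxy function `h(α) = Σ_{j∈T} lev^U_j(z ∘ (1_{Tᶜ} + α·1_T))`. -/
noncomputable def proxyh {d n : ℕ} (U : Matrix (Fin d) (Fin n) ℝ) (z : Fin n → ℝ)
    (T : Finset (Fin n)) (α : ℝ) : ℝ :=
  ∑ j ∈ T, lev U (scale z T α) j

/-- The submatrix of `U` consisting of the columns indexed by `T`. -/
def cols {d n : ℕ} (U : Matrix (Fin d) (Fin n) ℝ) (T : Finset (Fin n)) :
    Matrix (Fin d) {j // j ∈ T} ℝ :=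
  Matrix.of fun i j => U i j

/-!
Write `S = U Z Uᵀ` and `A = U Z_T Uᵀ` for the part of `S` coming from the columns in `T`, so that
`0 ≤ A ≤ S`. Scaling the weights on `T` by `α` turns `S` into `S + (α - 1) A`, whence
`h(α) = α tr((S + (α - 1) A)⁻¹ A)`. Whitening by `S^{-1/2}` reduces this to the eigenvalues
`μᵢ ∈ [0, 1]` of `S^{-1/2} A S^{-1/2}`: `h(α) = ∑ᵢ α μᵢ / (1 + (α - 1) μᵢ)`. Each summand is
non-decreasing and tends to `1` or `0` according as `μᵢ ≠ 0` or not, and the number of non-zero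
`μᵢ` is `rank A = rank U_T`; this gives (1), (2) and, by the intermediate value theorem, (4).
For (3), the leverage scores sum to `d = ∑ c`, so `lev - c` sums to zero and the margin forces
its sum over `T` below `-γ`.
-/

open Filter Topology Set
open scoped MatrixOrder

namespace Matrix

variable {m n : Type*} [Fintype m] [Fintype n]

section Spectral

variable [DecidableEq m]

theorem IsHermitian.trace_cfc {𝕜 : Type*} [RCLike 𝕜] {H : Matrix m m 𝕜} (hH : H.IsHermitian)
    (f : ℝ → ℝ) : (cfc f H).trace = ∑ i, (f (hH.eigenvalues i) : 𝕜) := by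
  rw [hH.cfc_eq, IsHermitian.cfc, Unitary.conjStarAlgAut_apply, trace_mul_cycle,
    Unitary.coe_star_mul_self, one_mul, trace_diagonal]
  rfl

theorem PosSemidef.trace_inv_one_add_smul_mul {H : Matrix m m ℝ} (hH : H.PosSemidef) {t : ℝ}
    (ht : 0 ≤ t) :
    ((1 + t • H)⁻¹ * H).trace =
      ∑ i, hH.isHermitian.eigenvalues i / (1 + t * hH.isHermitian.eigenvalues i) := by
  have hfin := H.finite_real_spectrum
  have hne : ∀ x ∈ spectrum ℝ H, 1 + t * x ≠ 0 := fun x hx =>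
    (add_pos_of_pos_of_nonneg one_pos (mul_nonneg ht (spectrum_nonneg_of_nonneg hH.nonneg hx))).ne'
  have hcfc : cfc (fun x => 1 + t * x) H = 1 + t • H := by
    rw [cfc_const_add .., cfc_const_mul .., cfc_id' .., map_one]
  have hinv : (1 + t • H)⁻¹ * H = cfc (fun x => x / (1 + t * x)) H := by
    simp_rw [div_eq_inv_mul]
    rw [cfc_mul _ _ _ (hfin.continuousOn _) (hfin.continuousOn _), cfc_id' .., cfc_inv _ _ hne,
      hcfc, nonsing_inv_eq_ringInverse]
  rw [hinv, hH.isHermitian.trace_cfc]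
  simp

theorem trace_inv_conj_mul_conj {K : Type*} [Field K] {R : Matrix m m K} (hR : IsUnit R)
    (N H : Matrix m m K) : ((R * N * R)⁻¹ * (R * H * R)).trace = (N⁻¹ * H).trace := by
  have hdet := (isUnit_iff_isUnit_det R).1 hR
  simp only [mul_inv_rev, mul_assoc]
  rw [← mul_assoc R⁻¹ R, nonsing_inv_mul R hdet, one_mul, trace_mul_comm, mul_assoc, mul_assoc,
    mul_nonsing_inv R hdet, mul_one]

/-- `μ` are the eigenvalues of `S^{-1/2} A S^{-1/2}`. -/
theorem exists_trace_inv_add_smul_mul {S A : Matrix m m ℝ} (hS : S.PosDef) (hA : 0 ≤ A)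
    (hAS : A ≤ S) :
    ∃ μ : m → ℝ, (∀ i, μ i ∈ Icc 0 1) ∧ A.rank = Fintype.card {i // μ i ≠ 0} ∧
      ∀ t, 0 ≤ t → ((S + t • A)⁻¹ * A).trace = ∑ i, μ i / (1 + t * μ i) := by
  set R := CFC.sqrt S
  have hRR : R * R = S := CFC.sqrt_mul_sqrt_self S hS.posSemidef.nonneg
  have hR : IsUnit R := (CFC.isUnit_sqrt_iff S hS.posSemidef.nonneg).2 hS.isUnit
  have hRdet := (isUnit_iff_isUnit_det R).1 hR
  have hRinv : IsSelfAdjoint R⁻¹ := (CFC.sqrt_nonneg S).isSelfAdjoint.isHermitian.inv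
  set H := R⁻¹ * A * R⁻¹
  have hH : H.PosSemidef := nonneg_iff_posSemidef.1 (hRinv.conjugate_nonneg hA)
  have hRSR : R⁻¹ * S * R⁻¹ = 1 := by
    rw [← hRR, ← mul_assoc, nonsing_inv_mul R hRdet, one_mul, mul_nonsing_inv R hRdet]
  have hH1 : H ≤ 1 := hRSR ▸ hRinv.conjugate_le_conjugate hAS
  have hRHR : R * H * R = A := by
    simp only [H, ← mul_assoc, mul_nonsing_inv R hRdet, one_mul]
    rw [mul_assoc, nonsing_inv_mul R hRdet, mul_one]
  refine ⟨hH.isHermitian.eigenvalues, fun i => ?_, ?_, fun t ht => ?_⟩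
  · have hi := hH.isHermitian.eigenvalues_mem_spectrum_real i
    exact ⟨spectrum_nonneg_of_nonneg hH.nonneg hi,
      (le_algebraMap_iff_spectrum_le (r := (1 : ℝ))).1 (by rwa [map_one]) _ hi⟩
  · have hRinvdet : IsUnit R⁻¹.det := (isUnit_iff_isUnit_det _).1 (isUnit_nonsing_inv_iff.2 hR)
    rw [← hH.isHermitian.rank_eq_card_non_zero_eigs, rank_mul_eq_left_of_isUnit_det _ _ hRinvdet,
      rank_mul_eq_right_of_isUnit_det _ _ hRinvdet]
  · have hpencil : S + t • A = R * (1 + t • H) * R := by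
      rw [mul_add, add_mul, mul_one, hRR, mul_smul_comm, smul_mul_assoc, hRHR]
    rw [hpencil, ← hRHR, trace_inv_conj_mul_conj hR, hH.trace_inv_one_add_smul_mul ht]

end Spectral

theorem vecMul_injective_of_rank_eq_card {K : Type*} [Field K] {U : Matrix m n K}
    (hU : U.rank = Fintype.card m) : Function.Injective U.vecMul :=
  vecMul_injective_iff.2 <| linearIndependent_iff_card_eq_finrank_span.2 <| by
    rw [Set.finrank, ← rank_eq_finrank_span_row, hU]

variable [DecidableEq n]

theorem posSemidef_mul_diagonal_mul_transpose (U : Matrix m n ℝ) {w : n → ℝ}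
    (hw : ∀ j, 0 ≤ w j) : (U * diagonal w * Uᵀ).PosSemidef := by
  simpa using (PosSemidef.diagonal (R := ℝ) hw).mul_mul_conjTranspose_same U

theorem posDef_mul_diagonal_mul_transpose {U : Matrix m n ℝ} (hU : U.rank = Fintype.card m)
    {w : n → ℝ} (hw : ∀ j, 0 < w j) : (U * diagonal w * Uᵀ).PosDef := by
  simpa using (PosDef.diagonal (R := ℝ) hw).mul_mul_conjTranspose_same
    (vecMul_injective_of_rank_eq_card hU)

theorem rank_mul_diagonal_mul_transpose (U : Matrix m n ℝ) {w : n → ℝ} (hw : ∀ j, 0 < w j) :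
    (U * diagonal w * Uᵀ).rank = U.rank := by
  set D := diagonal fun j => √(w j)
  have hsqrt : diagonal w = D * Dᵀ := by
    rw [diagonal_transpose, diagonal_mul_diagonal]
    exact congrArg diagonal (funext fun j => (Real.mul_self_sqrt (hw j).le).symm)
  have hdet : IsUnit D.det := by
    rw [det_diagonal]
    exact (Finset.prod_pos fun j _ => Real.sqrt_pos.2 (hw j)).ne'.isUnit
  rw [hsqrt, show U * (D * Dᵀ) * Uᵀ = U * D * (U * D)ᵀ by
      simp only [transpose_mul, Matrix.mul_assoc],
    rank_self_mul_transpose, rank_mul_eq_left_of_isUnit_det _ _ hdet]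

theorem sum_mul_dotProduct_mulVec_eq_trace {R : Type*} [CommRing R] (U : Matrix m n R)
    (w : n → R) (N : Matrix m m R) :
    ∑ j, w j * ((fun i => U i j) ⬝ᵥ (N *ᵥ fun i => U i j)) =
      (N * (U * diagonal w * Uᵀ)).trace := by
  simp only [trace, diag, mul_apply, mulVec, dotProduct, transpose_apply, diagonal_apply,
    mul_ite, mul_zero, Finset.sum_ite_eq', Finset.mem_univ, if_true, Finset.mul_sum]
  rw [Finset.sum_comm]
  refine Finset.sum_congr rfl fun i _ => ?_
  rw [Finset.sum_comm]
  exact Finset.sum_congr rfl fun j _ => Finset.sum_congr rfl fun k _ => by ring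

end Matrix

/-- By Sherman–Morrison, multiplying the weight of a column of leverage `m` by `α` changes its
leverage to `scaledLeverage m α`. -/
noncomputable def scaledLeverage (m α : ℝ) : ℝ :=
  α * m / (1 + (α - 1) * m)

section ScaledLeverage

variable {m : ℝ}

theorem one_add_sub_one_mul_pos (hm : 0 ≤ m) {α : ℝ} (hα : 1 ≤ α) : 0 < 1 + (α - 1) * m := by
  have := mul_nonneg (sub_nonneg.2 hα) hm
  linarith

theorem monotoneOn_scaledLeverage (hm₀ : 0 ≤ m) (hm₁ : m ≤ 1) :
    MonotoneOn (scaledLeverage m) (Ici 1) := by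
  intro a ha b hb hab
  rw [scaledLeverage, scaledLeverage, div_le_div_iff₀ (one_add_sub_one_mul_pos hm₀ ha)
    (one_add_sub_one_mul_pos hm₀ hb)]
  nlinarith [mul_nonneg (mul_nonneg (sub_nonneg.2 hab) hm₀) (sub_nonneg.2 hm₁)]

theorem continuousOn_scaledLeverage (hm : 0 ≤ m) : ContinuousOn (scaledLeverage m) (Ici 1) :=
  ContinuousOn.div (by fun_prop) (by fun_prop) fun _ hα => (one_add_sub_one_mul_pos hm hα).ne'

theorem tendsto_scaledLeverage (hm : 0 < m) : Tendsto (scaledLeverage m) atTop (𝓝 1) := by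
  have h : Tendsto (fun α => m / (m + (1 - m) * α⁻¹)) atTop (𝓝 (m / (m + (1 - m) * 0))) :=
    tendsto_const_nhds.div (tendsto_const_nhds.add (tendsto_inv_atTop_zero.const_mul _))
      (by simp [hm.ne'])
  rw [mul_zero, add_zero, div_self hm.ne'] at h
  refine h.congr' ((eventually_gt_atTop 0).mono fun α hα => ?_)
  rw [scaledLeverage]
  field_simp
  ring

variable {ι : Type*} [Fintype ι] {μ : ι → ℝ}

theorem monotoneOn_sum_scaledLeverage (hμ : ∀ i, μ i ∈ Icc 0 1) :
    MonotoneOn (fun α => ∑ i, scaledLeverage (μ i) α) (Ici 1) :=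
  fun _ ha _ hb hab => Finset.sum_le_sum fun i _ =>
    monotoneOn_scaledLeverage (hμ i).1 (hμ i).2 ha hb hab

theorem continuousOn_sum_scaledLeverage (hμ : ∀ i, 0 ≤ μ i) :
    ContinuousOn (fun α => ∑ i, scaledLeverage (μ i) α) (Ici 1) :=
  continuousOn_finsetSum _ fun i _ => continuousOn_scaledLeverage (hμ i)

theorem tendsto_sum_scaledLeverage (hμ : ∀ i, 0 ≤ μ i) :
    Tendsto (fun α => ∑ i, scaledLeverage (μ i) α) atTop
      (𝓝 (Fintype.card {i // μ i ≠ 0})) := by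
  rw [Fintype.card_subtype, ← Finset.sum_boole]
  refine tendsto_finsetSum _ fun i _ => ?_
  split_ifs with h
  · exact tendsto_scaledLeverage ((hμ i).lt_of_ne' h)
  · rw [not_not.1 h]
    exact tendsto_const_nhds.congr fun α => by simp [scaledLeverage]

end ScaledLeverage

section Proxy

variable {d n : ℕ} (U : Matrix (Fin d) (Fin n) ℝ) (z : Fin n → ℝ) (T : Finset (Fin n))

theorem sum_lev (hU : U.rank = d) (hz : ∀ j, 0 < z j) : ∑ j, lev U z j = d := by
  have hS := posDef_mul_diagonal_mul_transpose (by rwa [Fintype.card_fin]) hz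
  have h := sum_mul_dotProduct_mulVec_eq_trace U z (U * diagonal z * Uᵀ)⁻¹
  rwa [nonsing_inv_mul _ hS.det_pos.ne'.isUnit, trace_one, Fintype.card_fin] at h

theorem scale_eq_add_smul_piecewise (α : ℝ) : scale z T α = z + (α - 1) • T.piecewise z 0 := by
  funext j
  by_cases hj : j ∈ T <;> simp [scale, hj]
  ring

theorem proxyh_one : proxyh U z T 1 = ∑ j ∈ T, lev U z j := by
  simp [proxyh, scale_eq_add_smul_piecewise]

theorem proxyh_eq_trace (α : ℝ) :
    proxyh U z T α = α * ((U * diagonal z * Uᵀ +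
      (α - 1) • (U * diagonal (T.piecewise z 0) * Uᵀ))⁻¹ *
        (U * diagonal (T.piecewise z 0) * Uᵀ)).trace := by
  have hpencil : U * diagonal z * Uᵀ + (α - 1) • (U * diagonal (T.piecewise z 0) * Uᵀ) =
      U * diagonal (scale z T α) * Uᵀ := by
    have hdiag : diagonal (scale z T α) = diagonal z + (α - 1) • diagonal (T.piecewise z 0) := by
      rw [scale_eq_add_smul_piecewise, ← diagonal_smul, diagonal_add]
      rfl
    rw [hdiag, Matrix.mul_add, Matrix.add_mul, Matrix.mul_smul, Matrix.smul_mul]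
  rw [hpencil, ← sum_mul_dotProduct_mulVec_eq_trace, Finset.mul_sum, proxyh,
    ← Finset.sum_subset T.subset_univ fun j _ hj => by simp [hj]]
  refine Finset.sum_congr rfl fun j hj => ?_
  simp [lev, scale, hj, mul_assoc]

theorem rank_mul_diagonal_piecewise_mul_transpose (hz : ∀ j, 0 < z j) :
    (U * diagonal (T.piecewise z 0) * Uᵀ).rank = (cols U T).rank := by
  have h : U * diagonal (T.piecewise z 0) * Uᵀ =
      cols U T * diagonal (fun j : T => z j) * (cols U T)ᵀ := by
    ext i k
    rw [mul_apply, mul_apply]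
    simp only [mul_diagonal, transpose_apply, cols, of_apply]
    rw [Finset.sum_coe_sort T fun j => U i j * z j * U k j,
      ← Finset.sum_subset T.subset_univ fun j _ hj => by simp [hj]]
    exact Finset.sum_congr rfl fun j hj => by simp [hj]
  rw [h, rank_mul_diagonal_mul_transpose _ fun j : T => hz j]

theorem exists_proxyh_eqOn (hU : U.rank = d) (hz : ∀ j, 0 < z j) :
    ∃ μ : Fin d → ℝ, (∀ i, μ i ∈ Icc 0 1) ∧ (cols U T).rank = Fintype.card {i // μ i ≠ 0} ∧
      EqOn (proxyh U z T) (fun α => ∑ i, scaledLeverage (μ i) α) (Ici 1) := by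
  have hpiece : ∀ j, 0 ≤ T.piecewise z 0 j ∧ 0 ≤ z j - T.piecewise z 0 j := fun j => by
    by_cases hj : j ∈ T <;> simp [hj, (hz j).le]
  have hS := posDef_mul_diagonal_mul_transpose (by rwa [Fintype.card_fin]) hz
  have hA := posSemidef_mul_diagonal_mul_transpose U fun j => (hpiece j).1
  have hAS : U * diagonal (T.piecewise z 0) * Uᵀ ≤ U * diagonal z * Uᵀ := by
    rw [le_iff, ← Matrix.sub_mul, ← Matrix.mul_sub, diagonal_sub]
    exact posSemidef_mul_diagonal_mul_transpose U fun j => (hpiece j).2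
  obtain ⟨μ, hμ, hrank, htrace⟩ := exists_trace_inv_add_smul_mul hS hA.nonneg hAS
  refine ⟨μ, hμ, by rw [← rank_mul_diagonal_piecewise_mul_transpose U z T hz, hrank],
    fun α hα => ?_⟩
  rw [proxyh_eq_trace, htrace _ (sub_nonneg.2 hα), Finset.mul_sum]
  simp only [scaledLeverage, mul_div_assoc]

end Proxy

theorem sum_le_neg_of_separated {ι : Type*} [Fintype ι] [DecidableEq ι] {x : ι → ℝ}
    (hx : ∑ j, x j = 0) {T : Finset ι} (hT : T.Nonempty) (hT' : T ≠ Finset.univ) {ν γ : ℝ}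
    (hγ : 0 < γ) (h₁ : ∀ j ∈ T, x j ≤ ν - γ) (h₂ : ∀ j ∉ T, ν + γ ≤ x j) :
    ∑ j ∈ T, x j ≤ -γ := by
  have hsplit : ∑ j ∈ Tᶜ, x j = -∑ j ∈ T, x j := by
    rw [eq_neg_iff_add_eq_zero, Finset.sum_compl_add_sum, hx]
  have hTc : Tᶜ.Nonempty :=
    Finset.nonempty_iff_ne_empty.2 (by rwa [Ne, Finset.compl_eq_empty_iff])
  have hle : ∑ j ∈ T, x j ≤ T.card * (ν - γ) := by
    simpa [mul_sub] using Finset.sum_le_sum h₁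
  have hge : Tᶜ.card * (ν + γ) ≤ ∑ j ∈ Tᶜ, x j := by
    simpa [mul_add] using Finset.sum_le_sum fun j hj => h₂ j (Finset.mem_compl.1 hj)
  have hcard : (1 : ℝ) ≤ T.card ∧ (1 : ℝ) ≤ Tᶜ.card :=
    ⟨by exact_mod_cast hT.card_pos, by exact_mod_cast hTc.card_pos⟩
  -- for `ν ≥ 0` the bound on `Tᶜ` gives `-∑_T x ≥ ν + γ`; for `ν < 0` the bound on `T` suffices
  rcases le_or_gt 0 ν with hν | hν <;> nlinarith

theorem exists_eq_of_continuousOn_Ici_of_tendsto {f : ℝ → ℝ} {a y L : ℝ}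
    (hf : ContinuousOn f (Ici a)) (hL : Tendsto f atTop (𝓝 L)) (hay : f a ≤ y) (hyL : y < L) :
    ∃ x, a ≤ x ∧ f x = y := by
  obtain ⟨b, hyb, hab⟩ :=
    ((hL.eventually (eventually_ge_nhds hyL)).and (eventually_ge_atTop a)).exists
  obtain ⟨x, hx, hfx⟩ := intermediate_value_Icc hab (hf.mono Icc_subset_Ici_self) ⟨hay, hyb⟩
  exact ⟨x, hx.1, hfx⟩

/-- Structure of the proxy function `h` for a feasible instance:
(1) `h` is non-decreasing on `[1,∞)`; (2) `h(α) → rank(U_T)` as `α → ∞`;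
(3) `Σ_{j∈T} c_j − h(1) ≥ γ`; (4) if `rank(U_T) ≥ Σ_{j∈T} c_j` then for every
`δ ∈ [0,γ)` the equation `h(α) = h(1) + δ` has a finite solution `α ≥ 1`. -/
theorem proxy_structure {d n : ℕ} (U : Matrix (Fin d) (Fin n) ℝ) (hU : U.rank = d)
    (z : Fin n → ℝ) (hz : ∀ j, 0 < z j) (c : Fin n → ℝ) (hc : ∑ j, c j = (d : ℝ))
    (T : Finset (Fin n)) (hTne : T.Nonempty) (hTproper : T ≠ Finset.univ)
    (γ ν : ℝ) (hγ : 0 < γ)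
    (hmargin₁ : ∀ j ∈ T, lev U z j - c j ≤ ν - γ)
    (hmargin₂ : ∀ j ∉ T, ν + γ ≤ lev U z j - c j) :
    MonotoneOn (proxyh U z T) (Set.Ici (1 : ℝ)) ∧
    Filter.Tendsto (proxyh U z T) Filter.atTop (nhds ((cols U T).rank : ℝ)) ∧
    (∑ j ∈ T, c j) - proxyh U z T 1 ≥ γ ∧
    ((∑ j ∈ T, c j ≤ ((cols U T).rank : ℝ)) →
      ∀ δ : ℝ, 0 ≤ δ → δ < γ → ∃ α : ℝ, 1 ≤ α ∧
        proxyh U z T α = proxyh U z T 1 + δ) := by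
  obtain ⟨μ, hμ, hrank, hform⟩ := exists_proxyh_eqOn U z T hU hz
  have hlim : Tendsto (proxyh U z T) atTop (𝓝 ((cols U T).rank : ℝ)) := by
    rw [hrank]
    exact (tendsto_sum_scaledLeverage fun i => (hμ i).1).congr'
      (eventuallyEq_of_mem (Ici_mem_atTop 1) hform).symm
  have hgap : (∑ j ∈ T, c j) - proxyh U z T 1 ≥ γ := by
    have hsum : ∑ j, (lev U z j - c j) = 0 := by
      rw [Finset.sum_sub_distrib, sum_lev U z hU hz, hc, sub_self]
    have h := sum_le_neg_of_separated hsum hTne hTproper hγ hmargin₁ hmargin₂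
    rw [Finset.sum_sub_distrib] at h
    rw [proxyh_one]
    linarith
  refine ⟨(monotoneOn_sum_scaledLeverage hμ).congr hform.symm, hlim, hgap,
    fun _ δ hδ₀ hδγ => ?_⟩
  exact exists_eq_of_continuousOn_Ici_of_tendsto
    ((continuousOn_sum_scaledLeverage fun i => (hμ i).1).congr hform) hlim (by linarith)
    (by linarith)
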